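/- Let G = (V,E) be a finite connected graph with symmetric irreflexive edge relation, where each edge (i,j) ∈ E carries a continuous, strictly increasing bijection f_{ij} : ℝ → ℝ satisfying f_{ij}(x) = −f_{ji}(−x) for all x. Let T ⊆ V be nonempty, let β : T → ℝ, and let q : V \ T → ℝ. Then there exists a potential π : V → ℝ with π_t = β_t for all t ∈ T such that ∑_{j ∈ ∂i} f_{ji}^{-1}(π_j − π_i) + q_i = 0 for every i ∈ V \ T. -/

import Mathlib

/-!
The potential is found variationally. With `Φ j k` the primitive of `finv j k`, the solutions are
the critical points of the energy `∑ Φ j k (π j - π k) - 2 ∑ q i π i` over the potentials with the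
prescribed boundary values: since `finv j k s = - finv k j (-s)`, the partial derivative in `π i`
is `-2` times the flow balance at `i`. As `finv j k` is monotone and onto, `Φ j k` grows
superlinearly; on a connected graph with a fixed boundary value the edge differences control
`‖π‖`, so the energy is coercive and attains its minimum.
-/

open Finset Filter intervalIntegral

def GrowsSuperlinearly (φ : ℝ → ℝ) : Prop :=
  ∀ c, ∃ C, ∀ t, c * |t| - C ≤ φ t

section Primitive

variable {g : ℝ → ℝ}

theorem integral_add_mul_sub_le_integral (hg : Monotone g) (x t : ℝ) :
    (∫ s in (0 : ℝ)..x, g s) + g x * (t - x) ≤ ∫ s in (0 : ℝ)..t, g s := by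
  rw [← integral_add_adjacent_intervals (hg.intervalIntegrable (a := 0) (b := x))
    (hg.intervalIntegrable (b := t)), add_le_add_iff_left]
  rcases le_total x t with h | h
  · have : ∫ _ in x..t, g x ≤ ∫ s in x..t, g s :=
      integral_mono_on h intervalIntegrable_const hg.intervalIntegrable fun s hs => hg hs.1
    simpa [mul_comm] using this
  · have : ∫ s in t..x, g s ≤ ∫ _ in t..x, g x :=
      integral_mono_on h hg.intervalIntegrable intervalIntegrable_const fun s hs => hg hs.2
    rw [integral_symm]
    simp only [integral_const, smul_eq_mul] at this
    linarith

theorem growsSuperlinearly_primitive (hg : Monotone g) (hs : Function.Surjective g) :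
    GrowsSuperlinearly fun t => ∫ s in (0 : ℝ)..t, g s := by
  intro c
  obtain ⟨a, ha⟩ := hs c
  obtain ⟨b, hb⟩ := hs (-c)
  set Ca := c * a - ∫ s in (0 : ℝ)..a, g s
  set Cb := -c * b - ∫ s in (0 : ℝ)..b, g s
  refine ⟨max Ca Cb, fun t => ?_⟩
  have hsupp_a := integral_add_mul_sub_le_integral hg a t
  have hsupp_b := integral_add_mul_sub_le_integral hg b t
  rw [ha] at hsupp_a
  rw [hb] at hsupp_b
  rcases abs_cases t with ⟨ht, -⟩ | ⟨ht, -⟩ <;> rw [ht]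
  · linarith [le_max_left Ca Cb]
  · linarith [le_max_right Ca Cb]

end Primitive

theorem apply_eq_neg_apply_neg_of_inverse {f f' g g' : ℝ → ℝ} (hodd : ∀ x, f x = -f' (-x))
    (hg : Function.RightInverse g f) (hg' : Function.LeftInverse g' f') (s : ℝ) :
    g s = -g' (-s) := by
  have h : f' (-g s) = -s := by linarith [hodd (g s), hg s]
  rw [← h, hg', neg_neg]

section Graph

variable {V : Type*} [Fintype V] (E : V → V → Prop) [DecidableRel E]

def edgePairs : Finset (V × V) := univ.filter fun p => E p.1 p.2

variable {E}

theorem mem_edgePairs {p : V × V} : p ∈ edgePairs E ↔ E p.1 p.2 := by simp [edgePairs]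

theorem Relation.ReflTransGen.exists_abs_sub_le {u v : V} (h : Relation.ReflTransGen E u v) :
    ∃ n : ℕ, ∀ π : V → ℝ, |π u - π v| ≤ n * ∑ p ∈ edgePairs E, |π p.1 - π p.2| := by
  induction h with
  | refl => exact ⟨0, fun π => by simp⟩
  | @tail b c _ hbc ih =>
    obtain ⟨n, hn⟩ := ih
    refine ⟨n + 1, fun π => ?_⟩
    have hedge : |π b - π c| ≤ ∑ p ∈ edgePairs E, |π p.1 - π p.2| :=
      single_le_sum (f := fun p : V × V => |π p.1 - π p.2|) (fun _ _ => abs_nonneg _)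
        ((mem_edgePairs (p := (b, c))).2 hbc)
    push_cast
    linarith [abs_sub_le (π u) (π b) (π c), hn π]

theorem exists_norm_le_of_connected (hconn : ∀ u v, Relation.ReflTransGen E u v) (v₀ : V) :
    ∃ N : ℝ, ∀ π : V → ℝ, ‖π‖ ≤ N * ∑ p ∈ edgePairs E, |π p.1 - π p.2| + |π v₀| := by
  choose n hn using fun u => (hconn u v₀).exists_abs_sub_le
  refine ⟨∑ u, (n u : ℝ), fun π => (pi_norm_le_iff_of_nonneg (by positivity)).2 fun u => ?_⟩
  have hnN : (n u : ℝ) ≤ ∑ u, (n u : ℝ) :=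
    single_le_sum (f := fun u => (n u : ℝ)) (fun _ _ => by positivity) (mem_univ u)
  have hS : 0 ≤ ∑ p ∈ edgePairs E, |π p.1 - π p.2| := by positivity
  rw [Real.norm_eq_abs]
  linarith [abs_sub_abs_le_abs_sub (π u) (π v₀), hn u π, mul_le_mul_of_nonneg_right hnN hS]

theorem sum_edgePairs_mul_single_sub [DecidableEq V] (w : V → V → ℝ) (i : V) :
    ∑ p ∈ edgePairs E, w p.1 p.2 * ((Pi.single i 1 : V → ℝ) p.1 - (Pi.single i 1 : V → ℝ) p.2) =
      ∑ k ∈ univ.filter (E i ·), w i k - ∑ j ∈ univ.filter (E · i), w j i := by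
  simp only [edgePairs, mul_sub, sum_sub_distrib, sum_filter, Fintype.sum_prod_type,
    Pi.single_apply, mul_ite, mul_one, mul_zero]
  simp_rw [← ite_and, and_comm (a := E _ _), ite_and]
  rw [sum_comm (s := univ) (t := univ) (f := fun x y => if y = i then _ else _)]
  simp

theorem sum_out_eq_neg_sum_in (hsymm : ∀ i j, E i j → E j i) {w : V → V → ℝ → ℝ}
    (hw : ∀ j k, E j k → ∀ s, w j k s = -w k j (-s)) (π : V → ℝ) (i : V) :
    ∑ k ∈ univ.filter (E i ·), w i k (π i - π k) =
      -∑ j ∈ univ.filter (E · i), w j i (π j - π i) := by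
  rw [← sum_neg_distrib, filter_congr fun k _ => ⟨hsymm i k, hsymm k i⟩]
  exact sum_congr rfl fun k hk => by rw [hw i k (hsymm k i (mem_filter.1 hk).2), neg_sub]

end Graph

section Energy

variable {V : Type*} [Fintype V] {E : V → V → Prop} [DecidableRel E] {Φ : V → V → ℝ → ℝ}

variable (E) in
/-- Each undirected edge occurs twice in `edgePairs E`, hence the factor `2` on the load term. -/
def energy (Φ : V → V → ℝ → ℝ) (r π : V → ℝ) : ℝ :=
  ∑ p ∈ edgePairs E, Φ p.1 p.2 (π p.1 - π p.2) - 2 * ∑ v, r v * π v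

theorem continuous_energy (hΦ : ∀ j k, E j k → Continuous (Φ j k)) (r : V → ℝ) :
    Continuous (energy E Φ r) := by
  unfold energy
  refine .sub (continuous_finsetSum _ fun p hp => ?_) (by fun_prop)
  exact (hΦ _ _ (mem_edgePairs.1 hp)).comp (by fun_prop)

theorem exists_mul_sum_abs_sub_le_sum
    (hΦ : ∀ j k, E j k → GrowsSuperlinearly (Φ j k)) (c : ℝ) :
    ∃ C, ∀ π : V → ℝ, c * ∑ p ∈ edgePairs E, |π p.1 - π p.2| - C ≤
      ∑ p ∈ edgePairs E, Φ p.1 p.2 (π p.1 - π p.2) := by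
  choose! C hC using fun p (hp : p ∈ edgePairs E) => hΦ p.1 p.2 (mem_edgePairs.1 hp) c
  refine ⟨∑ p ∈ edgePairs E, C p, fun π => ?_⟩
  rw [mul_sum, ← sum_sub_distrib]
  exact sum_le_sum fun p hp => hC p hp _

theorem exists_norm_le_energy (hΦ : ∀ j k, E j k → GrowsSuperlinearly (Φ j k))
    (hconn : ∀ u v, Relation.ReflTransGen E u v) (v₀ : V) (r : V → ℝ) :
    ∃ A B : ℝ, ∀ π : V → ℝ, ‖π‖ ≤ energy E Φ r π + A * |π v₀| + B := by
  obtain ⟨N, hN⟩ := exists_norm_le_of_connected hconn v₀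
  set R := ∑ v, |r v|
  obtain ⟨C, hC⟩ := exists_mul_sum_abs_sub_le_sum hΦ (N * (2 * R + 1))
  refine ⟨2 * R + 1, C, fun π => ?_⟩
  have hR : 0 ≤ 2 * R + 1 := by positivity
  have hload : ∑ v, r v * π v ≤ R * ‖π‖ := by
    rw [sum_mul]
    refine sum_le_sum fun v _ => ?_
    calc r v * π v ≤ |r v| * |π v| := by rw [← abs_mul]; exact le_abs_self _
      _ ≤ |r v| * ‖π‖ := by gcongr; exact norm_le_pi_norm π v
  unfold energy
  nlinarith [mul_le_mul_of_nonneg_left (hN π) hR, hC π]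

theorem exists_isMinOn_energy (hΦc : ∀ j k, E j k → Continuous (Φ j k))
    (hΦ : ∀ j k, E j k → GrowsSuperlinearly (Φ j k))
    (hconn : ∀ u v, Relation.ReflTransGen E u v) {T : Finset V} (hT : T.Nonempty)
    (r β : V → ℝ) :
    ∃ π ∈ {π : V → ℝ | ∀ t ∈ T, π t = β t},
      IsMinOn (energy E Φ r) {π : V → ℝ | ∀ t ∈ T, π t = β t} π := by
  obtain ⟨t₀, ht₀⟩ := hT
  obtain ⟨A, B, hAB⟩ := exists_norm_le_energy hΦ hconn t₀ r
  have hclosed : IsClosed {π : V → ℝ | ∀ t ∈ T, π t = β t} := by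
    simp only [Set.ofPred_forall]
    exact isClosed_biInter fun t _ => isClosed_eq (continuous_apply t) continuous_const
  refine (continuous_energy hΦc r).continuousOn.exists_isMinOn' hclosed (x₀ := β)
    (fun _ _ => rfl) ?_
  have hfar : ∀ᶠ π in cocompact (V → ℝ), energy E Φ r β + A * |β t₀| + B ≤ ‖π‖ :=
    tendsto_norm_cocompact_atTop.eventually_ge_atTop _
  filter_upwards [mem_inf_of_left hfar, mem_inf_of_right (mem_principal_self _)] with π hπ hπT
  have := hAB π
  rw [hπT t₀ ht₀] at this
  linarith

theorem hasDerivAt_energy_add_smul {φ : V → V → ℝ → ℝ}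
    (hΦ : ∀ j k, E j k → ∀ x, HasDerivAt (Φ j k) (φ j k x) x) (r π e : V → ℝ) :
    HasDerivAt (fun t : ℝ => energy E Φ r (π + t • e))
      (∑ p ∈ edgePairs E, φ p.1 p.2 (π p.1 - π p.2) * (e p.1 - e p.2) - 2 * ∑ v, r v * e v)
      0 := by
  have hline : ∀ v, HasDerivAt (fun t : ℝ => (π + t • e) v) (e v) 0 := fun v => by
    simpa using (hasDerivAt_mul_const (e v)).const_add (π v)
  refine .sub (.fun_sum fun p hp => ?_)
    ((HasDerivAt.fun_sum fun v _ => (hline v).const_mul (r v)).const_mul 2)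
  exact (hΦ _ _ (mem_edgePairs.1 hp) _).comp_of_eq 0 ((hline p.1).fun_sub (hline p.2)) (by simp)

theorem flow_balance_of_isMinOn_energy [DecidableEq V] {φ : V → V → ℝ → ℝ}
    (hΦ : ∀ j k, E j k → ∀ x, HasDerivAt (Φ j k) (φ j k x) x) {r π : V → ℝ} {S : Set (V → ℝ)}
    (hmin : IsMinOn (energy E Φ r) S π) {i : V} (hline : ∀ t : ℝ, π + t • Pi.single i 1 ∈ S) :
    ∑ k ∈ univ.filter (E i ·), φ i k (π i - π k) -
      ∑ j ∈ univ.filter (E · i), φ j i (π j - π i) = 2 * r i := by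
  have hloc : IsLocalMin (fun t : ℝ => energy E Φ r (π + t • Pi.single i 1)) 0 :=
    Eventually.of_forall fun t => by simpa using hmin (hline t)
  have := hloc.hasDerivAt_eq_zero (hasDerivAt_energy_add_smul hΦ r π (Pi.single i 1))
  rw [sum_edgePairs_mul_single_sub (fun j k => φ j k (π j - π k))] at this
  simp only [Pi.single_apply, mul_ite, mul_one, mul_zero, sum_ite_eq', mem_univ, if_true]
    at this
  linarith

end Energy

theorem dissipative_potential_exists_general
    {V : Type*} [Fintype V]
    (E : V → V → Prop) [DecidableRel E]
    (hsymm : ∀ i j, E i j → E j i)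
    (hconn : ∀ u v : V, Relation.ReflTransGen E u v)
    (f : V → V → ℝ → ℝ)
    (hfmono : ∀ i j, E i j → StrictMono (f i j))
    (hfsymm : ∀ i j, E i j → ∀ x : ℝ, f i j x = - f j i (-x))
    (finv : V → V → ℝ → ℝ)
    (hfinv : ∀ i j, E i j →
      Function.LeftInverse (finv i j) (f i j) ∧
      Function.RightInverse (finv i j) (f i j))
    (T : Finset V) (hT : T.Nonempty)
    (β : {i : V // i ∈ T} → ℝ)
    (q : {i : V // i ∉ T} → ℝ) :
    ∃ π : V → ℝ,
      (∀ t (h : t ∈ T), π t = β ⟨t, h⟩) ∧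
      (∀ i (h : i ∉ T),
        (∑ j ∈ univ.filter (fun j => E j i), finv j i (π j - π i)) + q ⟨i, h⟩ = 0) := by
  classical
  let fIso i j (h : E i j) :=
    (hfmono i j h).orderIsoOfRightInverse (f i j) (finv i j) (hfinv i j h).2
  have hodd i j (h : E i j) := apply_eq_neg_apply_neg_of_inverse (hfsymm i j h) (hfinv i j h).2
    (hfinv j i (hsymm i j h)).1
  have hΦ' i j (h : E i j) (x : ℝ) :
      HasDerivAt (fun t => ∫ s in (0 : ℝ)..t, finv i j s) (finv i j x) x :=
    ((fIso i j h).symm.continuous.integral_hasStrictDerivAt 0 x).hasDerivAt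
  have hΦc i j (h : E i j) : Continuous fun t => ∫ s in (0 : ℝ)..t, finv i j s :=
    continuous_iff_continuousAt.2 fun x => (hΦ' i j h x).continuousAt
  have hΦ i j (h : E i j) :=
    growsSuperlinearly_primitive (fIso i j h).symm.monotone (fIso i j h).symm.surjective
  let β' v := if h : v ∈ T then β ⟨v, h⟩ else 0
  let r v := if h : v ∈ T then 0 else q ⟨v, h⟩
  obtain ⟨π, hπT, hmin⟩ := exists_isMinOn_energy hΦc hΦ hconn hT r β'
  refine ⟨π, fun t ht => by simpa [β', ht] using hπT t ht, fun i hi => ?_⟩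
  have hbalance := flow_balance_of_isMinOn_energy hΦ' hmin (i := i) fun s t ht => by
    simp [ne_of_mem_of_not_mem ht hi, hπT t ht]
  rw [sum_out_eq_neg_sum_in hsymm hodd] at hbalance
  simp only [r, dif_neg hi] at hbalance
  linarith

/-- **Existence of dissipative flow solutions**: on a finite connected graph
with symmetric irreflexive edge relation, with each edge carrying a continuous
strictly increasing bijection `f i j : ℝ → ℝ` satisfying `f i j x = - f j i (-x)`
(with inverse `finv i j`), for a nonempty `T ⊆ V`, boundary values `β` on `T`
and injections `q` off `T`, there exists a potential `π : V → ℝ` agreeing with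
`β` on `T` and satisfying `∑_{j ∈ ∂ i} f⁻¹ j i (π j - π i) + q i = 0` at every
node `i ∉ T`. -/
theorem dissipative_potential_exists
    {V : Type*} [Fintype V] [DecidableEq V] [Nonempty V]
    (E : V → V → Prop) [DecidableRel E]
    (hsymm : ∀ i j, E i j → E j i)
    (hirrefl : ∀ i, ¬ E i i)
    (hconn : ∀ u v : V, Relation.ReflTransGen E u v)
    (f : V → V → ℝ → ℝ)
    (hfcont : ∀ i j, E i j → Continuous (f i j))
    (hfmono : ∀ i j, E i j → StrictMono (f i j))
    (hfbij : ∀ i j, E i j → Function.Bijective (f i j))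
    (hfsymm : ∀ i j, E i j → ∀ x : ℝ, f i j x = - f j i (-x))
    (finv : V → V → ℝ → ℝ)
    (hfinv : ∀ i j, E i j →
      Function.LeftInverse (finv i j) (f i j) ∧
      Function.RightInverse (finv i j) (f i j))
    (T : Finset V) (hT : T.Nonempty)
    (β : {i : V // i ∈ T} → ℝ)
    (q : {i : V // i ∉ T} → ℝ) :
    ∃ π : V → ℝ,
      (∀ t (h : t ∈ T), π t = β ⟨t, h⟩) ∧
      (∀ i (h : i ∉ T),
        (∑ j ∈ univ.filter (fun j => E j i), finv j i (π j - π i)) + q ⟨i, h⟩ = 0) :=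
  dissipative_potential_exists_general E hsymm hconn f hfmono hfsymm finv hfinv T hT β q
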